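/- arXiv:2505.18810 — 3 statements merged into one kernel-verified Lean document; each statement's English description precedes it below -/
import Mathlib

section
/- Let X ⊆ ℝⁿ be open, H ∈ C¹(X,ℝ), let D̄H be a discrete gradient for H, let h > 0, and let Ē : X × X → ℝ^{n×n}, J̄, R̄ : X × X → ℝ^{n×n}, B̄ : X × X → ℝ^{n×m} be continuous with J̄ pointwise skew-symmetric and R̄ pointwise symmetric positive semi-definite. Suppose x^k, x^{k+1} ∈ X, f^k ∈ ℝⁿ, u^k ∈ ℝᵐ, y^k ∈ ℝᵐ satisfy Ē(x^k,x^{k+1})(x^{k+1} − x^k) = h (J̄(x^k,x^{k+1}) − R̄(x^k,x^{k+1})) f^k + h B̄(x^k,x^{k+1}) u^k, y^k = B̄(x^k,x^{k+1})ᵀ f^k, and Ē(x^k,x^{k+1})ᵀ f^k = D̄H(x^k,x^{k+1}). Then H(x^{k+1}) − H(x^k) = −h (f^k)ᵀ R̄(x^k,x^{k+1}) f^k + h (y^k)ᵀ u^k, and in particular H(x^{k+1}) − H(x^k) ≤ h (y^k)ᵀ u^k. -/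
/-! Pairing the step equation with the costate `f` turns `Ē (x' - x)` into `D̄H(x, x') ⬝ (x' - x)`,
which is `H x' - H x` by the discrete gradient property; on the right-hand side the skew part `J̄`
contributes nothing, the dissipative part gives `-h fᵀ R̄ f ≤ 0` and the port part gives `h yᵀ u`. -/

open Matrix Set

noncomputable def grad {n : ℕ} (f : (Fin n → ℝ) → ℝ) (x : Fin n → ℝ) : Fin n → ℝ :=
  fun i => fderiv ℝ f x (Pi.single i 1)

def IsDiscreteGradient {n : ℕ} (X : Set (Fin n → ℝ)) (f : (Fin n → ℝ) → ℝ)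
    (Df : (Fin n → ℝ) → (Fin n → ℝ) → (Fin n → ℝ)) : Prop :=
  ContinuousOn (fun p : (Fin n → ℝ) × (Fin n → ℝ) => Df p.1 p.2) (X ×ˢ X) ∧
  (∀ x ∈ X, ∀ x' ∈ X, Df x x' ⬝ᵥ (x' - x) = f x' - f x) ∧
  (∀ x ∈ X, Df x x = grad f x)

namespace Matrix

variable {ι κ R : Type*} [Fintype ι] [Fintype κ]

theorem transpose_mulVec_dotProduct [CommSemiring R] (A : Matrix ι κ R) (v : ι → R)
    (w : κ → R) : Aᵀ *ᵥ v ⬝ᵥ w = v ⬝ᵥ A *ᵥ w := by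
  rw [mulVec_transpose, dotProduct_mulVec]

theorem dotProduct_mulVec_self_eq_zero_of_transpose_eq_neg [CommRing R] [IsAddTorsionFree R]
    {J : Matrix ι ι R} (hJ : Jᵀ = -J) (v : ι → R) : v ⬝ᵥ J *ᵥ v = 0 := by
  refine self_eq_neg.mp ?_
  calc v ⬝ᵥ J *ᵥ v = Jᵀ *ᵥ v ⬝ᵥ v := by rw [transpose_mulVec_dotProduct, dotProduct_comm]
    _ = -(v ⬝ᵥ J *ᵥ v) := by rw [hJ, neg_mulVec, neg_dotProduct, dotProduct_comm]

theorem transpose_mulVec_dotProduct_eq_of_skew_step [CommRing R] [IsAddTorsionFree R]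
    {E J D : Matrix ι ι R} {B : Matrix ι κ R} (hJ : Jᵀ = -J) {f Δ : ι → R} {u : κ → R} {h : R}
    (hstep : E *ᵥ Δ = h • ((J - D) *ᵥ f) + h • (B *ᵥ u)) :
    Eᵀ *ᵥ f ⬝ᵥ Δ = -(h * (f ⬝ᵥ D *ᵥ f)) + h * (Bᵀ *ᵥ f ⬝ᵥ u) := by
  rw [transpose_mulVec_dotProduct, hstep, transpose_mulVec_dotProduct, dotProduct_add,
    dotProduct_smul, dotProduct_smul, sub_mulVec, dotProduct_sub,
    dotProduct_mulVec_self_eq_zero_of_transpose_eq_neg hJ, smul_eq_mul, smul_eq_mul]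
  ring

end Matrix

theorem DDR_method_power_balance_general {n m : ℕ}
    (X : Set (Fin n → ℝ))
    (H : (Fin n → ℝ) → ℝ)
    (DH : (Fin n → ℝ) → (Fin n → ℝ) → (Fin n → ℝ))
    (hDH : IsDiscreteGradient X H DH)
    (h : ℝ) (hh : 0 < h)
    (Ebar Jbar Rbar : (Fin n → ℝ) → (Fin n → ℝ) → Matrix (Fin n) (Fin n) ℝ)
    (Bbar : (Fin n → ℝ) → (Fin n → ℝ) → Matrix (Fin n) (Fin m) ℝ)
    (hJskew : ∀ x ∈ X, ∀ x' ∈ X, (Jbar x x')ᵀ = -(Jbar x x'))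
    (hRpsd : ∀ x ∈ X, ∀ x' ∈ X, (Rbar x x').PosSemidef)
    (xk xk1 : Fin n → ℝ) (hxk : xk ∈ X) (hxk1 : xk1 ∈ X)
    (fk : Fin n → ℝ) (uk yk : Fin m → ℝ)
    (hstep : (Ebar xk xk1).mulVec (xk1 - xk)
      = h • ((Jbar xk xk1 - Rbar xk xk1).mulVec fk) + h • ((Bbar xk xk1).mulVec uk))
    (hout : yk = (Bbar xk xk1)ᵀ.mulVec fk)
    (hcostate : (Ebar xk xk1)ᵀ.mulVec fk = DH xk xk1) :
    H xk1 - H xk = -(h * (fk ⬝ᵥ (Rbar xk xk1).mulVec fk)) + h * (yk ⬝ᵥ uk)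
    ∧ H xk1 - H xk ≤ h * (yk ⬝ᵥ uk) := by
  have balance : H xk1 - H xk = -(h * (fk ⬝ᵥ (Rbar xk xk1).mulVec fk)) + h * (yk ⬝ᵥ uk) := by
    rw [← hDH.2.1 xk hxk xk1 hxk1, ← hcostate, hout]
    exact transpose_mulVec_dotProduct_eq_of_skew_step (hJskew xk hxk xk1 hxk1) hstep
  have dissipation : 0 ≤ h * (fk ⬝ᵥ (Rbar xk xk1).mulVec fk) :=
    mul_nonneg hh.le (by simpa using (hRpsd xk hxk xk1 hxk1).dotProduct_mulVec_nonneg fk)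
  exact ⟨balance, by linarith⟩

/-- discrete power balance and dissipation inequality for the
DDR-method. -/
theorem DDR_method_power_balance {n m : ℕ}
    (X : Set (Fin n → ℝ)) (hX : IsOpen X)
    (H : (Fin n → ℝ) → ℝ) (hH : ContDiffOn ℝ 1 H X)
    (DH : (Fin n → ℝ) → (Fin n → ℝ) → (Fin n → ℝ))
    (hDH : IsDiscreteGradient X H DH)
    (h : ℝ) (hh : 0 < h)
    (Ebar Jbar Rbar : (Fin n → ℝ) → (Fin n → ℝ) → Matrix (Fin n) (Fin n) ℝ)
    (Bbar : (Fin n → ℝ) → (Fin n → ℝ) → Matrix (Fin n) (Fin m) ℝ)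
    (hEcont : ContinuousOn (fun p : (Fin n → ℝ) × (Fin n → ℝ) => Ebar p.1 p.2) (X ×ˢ X))
    (hJcont : ContinuousOn (fun p : (Fin n → ℝ) × (Fin n → ℝ) => Jbar p.1 p.2) (X ×ˢ X))
    (hRcont : ContinuousOn (fun p : (Fin n → ℝ) × (Fin n → ℝ) => Rbar p.1 p.2) (X ×ˢ X))
    (hBcont : ContinuousOn (fun p : (Fin n → ℝ) × (Fin n → ℝ) => Bbar p.1 p.2) (X ×ˢ X))
    (hJskew : ∀ x ∈ X, ∀ x' ∈ X, (Jbar x x')ᵀ = -(Jbar x x'))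
    (hRpsd : ∀ x ∈ X, ∀ x' ∈ X, (Rbar x x').PosSemidef)
    (xk xk1 : Fin n → ℝ) (hxk : xk ∈ X) (hxk1 : xk1 ∈ X)
    (fk : Fin n → ℝ) (uk yk : Fin m → ℝ)
    (hstep : (Ebar xk xk1).mulVec (xk1 - xk)
      = h • ((Jbar xk xk1 - Rbar xk xk1).mulVec fk) + h • ((Bbar xk xk1).mulVec uk))
    (hout : yk = (Bbar xk xk1)ᵀ.mulVec fk)
    (hcostate : (Ebar xk xk1)ᵀ.mulVec fk = DH xk xk1) :
    H xk1 - H xk = -(h * (fk ⬝ᵥ (Rbar xk xk1).mulVec fk)) + h * (yk ⬝ᵥ uk)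
    ∧ H xk1 - H xk ≤ h * (yk ⬝ᵥ uk) :=
  DDR_method_power_balance_general X H DH hDH h hh Ebar Jbar Rbar Bbar hJskew hRpsd xk xk1 hxk hxk1
    fk uk yk hstep hout hcostate
end

section
/- Let (E,z) be a gradient pair for H ∈ C¹(X,ℝ) on an open set X ⊆ ℝⁿ, let φ ∈ C¹(X̃,X) be a diffeomorphism and U : X̃ → ℝ^{n×n} continuous and pointwise invertible, and let (Ẽ, z̃) = (Uᵀ(E∘φ)Dφ, U^{-1}(z∘φ)) be the transformed gradient pair for H̃ = H∘φ. Let (Ē,z̄) be a discrete gradient pair for (H,E,z), let D̄φ be a discrete Jacobian for φ, and let Ū : X̃ × X̃ → ℝ^{n×n} be a consistent discretization of U that is invertible at every point. Then the pair (Ê, ẑ) defined by Ê(x̃,x̃') = Ū(x̃,x̃')ᵀ Ē(φ(x̃),φ(x̃')) D̄φ(x̃,x̃') and ẑ(x̃,x̃') = Ū(x̃,x̃')^{-1} z̄(φ(x̃),φ(x̃')) is a discrete gradient pair for (H̃, Ẽ, z̃). -/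
open Matrix Set

noncomputable def jac {n m : ℕ} (f : (Fin n → ℝ) → (Fin m → ℝ)) (x : Fin n → ℝ) :
    Matrix (Fin m) (Fin n) ℝ :=
  Matrix.of fun i j => fderiv ℝ f x (Pi.single j 1) i

def IsDiscreteJacobian {n m : ℕ} (X : Set (Fin n → ℝ)) (F : (Fin n → ℝ) → (Fin m → ℝ))
    (DF : (Fin n → ℝ) → (Fin n → ℝ) → Matrix (Fin m) (Fin n) ℝ) : Prop :=
  ContinuousOn (fun p : (Fin n → ℝ) × (Fin n → ℝ) => DF p.1 p.2) (X ×ˢ X) ∧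
  (∀ x ∈ X, ∀ x' ∈ X, (DF x x').mulVec (x' - x) = F x' - F x) ∧
  (∀ x ∈ X, DF x x = jac F x)

def IsDiscreteGradientPair {n : ℕ} (X : Set (Fin n → ℝ)) (H : (Fin n → ℝ) → ℝ)
    (E : (Fin n → ℝ) → Matrix (Fin n) (Fin n) ℝ) (z : (Fin n → ℝ) → (Fin n → ℝ))
    (Ebar : (Fin n → ℝ) → (Fin n → ℝ) → Matrix (Fin n) (Fin n) ℝ)
    (zbar : (Fin n → ℝ) → (Fin n → ℝ) → (Fin n → ℝ)) : Prop :=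
  ContinuousOn (fun p : (Fin n → ℝ) × (Fin n → ℝ) => Ebar p.1 p.2) (X ×ˢ X) ∧
  ContinuousOn (fun p : (Fin n → ℝ) × (Fin n → ℝ) => zbar p.1 p.2) (X ×ˢ X) ∧
  (∀ x ∈ X, ∀ x' ∈ X, zbar x x' ⬝ᵥ (Ebar x x').mulVec (x' - x) = H x' - H x) ∧
  (∀ x ∈ X, Ebar x x = E x) ∧
  (∀ x ∈ X, zbar x x = z x)

theorem ContinuousOn.matrix_inv {α ι K : Type*} [TopologicalSpace α] [Fintype ι] [DecidableEq ι]
    [Field K] [TopologicalSpace K] [IsTopologicalRing K] [ContinuousInv₀ K]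
    {A : α → Matrix ι ι K} {S : Set α} (hA : ContinuousOn A S)
    (hdet : ∀ x ∈ S, IsUnit (A x).det) : ContinuousOn (fun x => (A x)⁻¹) S := by
  intro x hx
  have hinv_det : ContinuousAt Ring.inverse (A x).det := by
    rw [Ring.inverse_eq_inv']
    exact continuousAt_inv₀ (hdet x hx).ne_zero
  exact (continuousAt_matrix_inv _ hinv_det).comp_continuousWithinAt (hA x hx)

theorem Matrix.inv_mulVec_dotProduct_transpose_mul_mulVec {ι R : Type*} [Fintype ι]
    [DecidableEq ι] [CommRing R] (U M : Matrix ι ι R) (hU : IsUnit U.det) (z v : ι → R) :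
    U⁻¹ *ᵥ z ⬝ᵥ (Uᵀ * M) *ᵥ v = z ⬝ᵥ M *ᵥ v := by
  rw [← mulVec_mulVec, dotProduct_mulVec, vecMul_transpose, mulVec_mulVec,
    mul_nonsing_inv U hU, one_mulVec]

theorem transformed_discrete_gradient_pair_general {n : ℕ}
    (X Xt : Set (Fin n → ℝ)) (H : (Fin n → ℝ) → ℝ)
    (E : (Fin n → ℝ) → Matrix (Fin n) (Fin n) ℝ) (z : (Fin n → ℝ) → (Fin n → ℝ))
    (φ : (Fin n → ℝ) → (Fin n → ℝ))
    (hφ : ContDiffOn ℝ 1 φ Xt) (hφmap : Set.MapsTo φ Xt X)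
    (U : (Fin n → ℝ) → Matrix (Fin n) (Fin n) ℝ)
    -- a discrete gradient pair for (H, E, z)
    (Ebar : (Fin n → ℝ) → (Fin n → ℝ) → Matrix (Fin n) (Fin n) ℝ)
    (zbar : (Fin n → ℝ) → (Fin n → ℝ) → (Fin n → ℝ))
    (hpair : IsDiscreteGradientPair X H E z Ebar zbar)
    -- a discrete Jacobian for φ
    (Dφ : (Fin n → ℝ) → (Fin n → ℝ) → Matrix (Fin n) (Fin n) ℝ)
    (hDφ : IsDiscreteJacobian Xt φ Dφ)
    -- a consistent, pointwise invertible discretization of U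
    (Ub : (Fin n → ℝ) → (Fin n → ℝ) → Matrix (Fin n) (Fin n) ℝ)
    (hUbcont : ContinuousOn (fun p : (Fin n → ℝ) × (Fin n → ℝ) => Ub p.1 p.2) (Xt ×ˢ Xt))
    (hUbcons : ∀ xt ∈ Xt, Ub xt xt = U xt)
    (hUbinv : ∀ xt ∈ Xt, ∀ xt' ∈ Xt, IsUnit (Ub xt xt').det) :
    IsDiscreteGradientPair Xt (H ∘ φ)
      (fun xt => (U xt)ᵀ * E (φ xt) * jac φ xt)
      (fun xt => ((U xt)⁻¹).mulVec (z (φ xt)))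
      (fun xt xt' => (Ub xt xt')ᵀ * Ebar (φ xt) (φ xt') * Dφ xt xt')
      (fun xt xt' => ((Ub xt xt')⁻¹).mulVec (zbar (φ xt) (φ xt'))) := by
  obtain ⟨hEbar_cont, hzbar_cont, hEbar_zbar, hEbar_diag, hzbar_diag⟩ := hpair
  obtain ⟨hDφ_cont, hDφ_secant, hDφ_diag⟩ := hDφ
  have hφφ_cont := hφ.continuousOn.prodMap hφ.continuousOn
  have hφφ_maps := hφmap.prodMap hφmap
  have hEbar_φ : ContinuousOn (fun p : _ × _ => Ebar (φ p.1) (φ p.2)) (Xt ×ˢ Xt) :=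
    hEbar_cont.comp hφφ_cont hφφ_maps
  have hzbar_φ : ContinuousOn (fun p : _ × _ => zbar (φ p.1) (φ p.2)) (Xt ×ˢ Xt) :=
    hzbar_cont.comp hφφ_cont hφφ_maps
  have hUbar_inv : ContinuousOn (fun p : _ × _ => (Ub p.1 p.2)⁻¹) (Xt ×ˢ Xt) :=
    ContinuousOn.matrix_inv hUbcont fun p hp => hUbinv _ hp.1 _ hp.2
  refine ⟨?_, ?_, fun x hx x' hx' => ?_, fun x hx => ?_, fun x hx => ?_⟩
  · exact ((continuous_id.matrix_transpose.comp_continuousOn hUbcont).mul hEbar_φ).mul hDφ_cont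
  · exact (continuous_fst.matrix_mulVec continuous_snd).comp_continuousOn (hUbar_inv.prodMk hzbar_φ)
  · rw [← mulVec_mulVec, hDφ_secant x hx x' hx',
      inv_mulVec_dotProduct_transpose_mul_mulVec _ _ (hUbinv x hx x' hx')]
    exact hEbar_zbar _ (hφmap hx) _ (hφmap hx')
  · simp only [hUbcons x hx, hEbar_diag _ (hφmap hx), hDφ_diag x hx]
  · simp only [hUbcons x hx, hzbar_diag _ (hφmap hx)]

/-- transformation of discrete gradient pairs under an invertible
system transformation `(φ, U)`, using a discrete Jacobian of `φ` and a
consistent pointwise invertible discretization of `U`. -/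
theorem transformed_discrete_gradient_pair {n : ℕ}
    (X Xt : Set (Fin n → ℝ)) (hX : IsOpen X) (hXt : IsOpen Xt)
    (H : (Fin n → ℝ) → ℝ) (hH : ContDiffOn ℝ 1 H X)
    (E : (Fin n → ℝ) → Matrix (Fin n) (Fin n) ℝ) (z : (Fin n → ℝ) → (Fin n → ℝ))
    (hEcont : ContinuousOn E X) (hzcont : ContinuousOn z X)
    (hgradpair : ∀ x ∈ X, (E x)ᵀ.mulVec (z x) = grad H x)
    (φ ψ : (Fin n → ℝ) → (Fin n → ℝ))
    (hφ : ContDiffOn ℝ 1 φ Xt) (hφmap : Set.MapsTo φ Xt X)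
    (hψ : ContDiffOn ℝ 1 ψ X) (hψmap : Set.MapsTo ψ X Xt)
    (hψφ : ∀ xt ∈ Xt, ψ (φ xt) = xt) (hφψ : ∀ x ∈ X, φ (ψ x) = x)
    (U : (Fin n → ℝ) → Matrix (Fin n) (Fin n) ℝ)
    (hUcont : ContinuousOn U Xt) (hUinv : ∀ xt ∈ Xt, IsUnit (U xt).det)
    -- a discrete gradient pair for (H, E, z)
    (Ebar : (Fin n → ℝ) → (Fin n → ℝ) → Matrix (Fin n) (Fin n) ℝ)
    (zbar : (Fin n → ℝ) → (Fin n → ℝ) → (Fin n → ℝ))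
    (hpair : IsDiscreteGradientPair X H E z Ebar zbar)
    -- a discrete Jacobian for φ
    (Dφ : (Fin n → ℝ) → (Fin n → ℝ) → Matrix (Fin n) (Fin n) ℝ)
    (hDφ : IsDiscreteJacobian Xt φ Dφ)
    -- a consistent, pointwise invertible discretization of U
    (Ub : (Fin n → ℝ) → (Fin n → ℝ) → Matrix (Fin n) (Fin n) ℝ)
    (hUbcont : ContinuousOn (fun p : (Fin n → ℝ) × (Fin n → ℝ) => Ub p.1 p.2) (Xt ×ˢ Xt))
    (hUbcons : ∀ xt ∈ Xt, Ub xt xt = U xt)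
    (hUbinv : ∀ xt ∈ Xt, ∀ xt' ∈ Xt, IsUnit (Ub xt xt').det) :
    IsDiscreteGradientPair Xt (H ∘ φ)
      (fun xt => (U xt)ᵀ * E (φ xt) * jac φ xt)
      (fun xt => ((U xt)⁻¹).mulVec (z (φ xt)))
      (fun xt xt' => (Ub xt xt')ᵀ * Ebar (φ xt) (φ xt') * Dφ xt xt')
      (fun xt xt' => ((Ub xt xt')⁻¹).mulVec (zbar (φ xt) (φ xt'))) :=
  transformed_discrete_gradient_pair_general X Xt H E z φ hφ hφmap U Ebar zbar hpair Dφ hDφ Ub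
    hUbcont hUbcons hUbinv
end

section
/- Let X = X₁ × X₂ and X̃ = X̃₁ × X̃₂ with X₁,X̃₁ ⊆ ℝ^{n₁} open, X₂,X̃₂ ⊆ ℝ^{n₂} open and convex, and let φ = (φ₁,φ₂) ∈ C¹(X̃,X) be a diffeomorphism with D_{x̃₂}φ₁ = 0 everywhere. Then: (i) there exists a diffeomorphism φ₁₁ ∈ C¹(X̃₁,X₁) such that φ₁₁(x̃₁) = φ₁(x̃₁,x̃₂) and Dφ₁₁(x̃₁) = D_{x̃₁}φ₁(x̃₁,x̃₂) for all (x̃₁,x̃₂) ∈ X̃; and (ii) if H ∈ C¹(X,ℝ) satisfies ∇_{x₂}H = 0 everywhere, H₁ ∈ C¹(X₁,ℝ) is its specified function, D̄H₁ is a discrete gradient for H₁, and D̄φ₁₁ is a discrete Jacobian for φ₁₁, then H̃ = H∘φ satisfies ∇_{x̃₂}H̃ = 0 everywhere, its specified function equals H̃₁ = H₁∘φ₁₁, and the map D̄H̃₁(x̃₁,x̃₁') = D̄φ₁₁(x̃₁,x̃₁')ᵀ D̄H₁(φ₁₁(x̃₁),φ₁₁(x̃₁')) is a discrete gradient for H̃₁.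 -/
open Matrix Set

noncomputable def grad1 {n1 n2 : ℕ} (f : ((Fin n1 → ℝ) × (Fin n2 → ℝ)) → ℝ)
    (x : (Fin n1 → ℝ) × (Fin n2 → ℝ)) : Fin n1 → ℝ :=
  fun i => fderiv ℝ f x (Pi.single i 1, 0)

noncomputable def grad2 {n1 n2 : ℕ} (f : ((Fin n1 → ℝ) × (Fin n2 → ℝ)) → ℝ)
    (x : (Fin n1 → ℝ) × (Fin n2 → ℝ)) : Fin n2 → ℝ :=
  fun j => fderiv ℝ f x (0, Pi.single j 1)

/-!
Since `D_{x̃₂}φ₁ = 0` and `X̃₂` is convex, `φ₁` does not depend on `x̃₂`, so `φ₁₁` is a slice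
of `φ₁`. The derivative of `φ` is block lower triangular, hence so is that of its inverse `ψ`
(an injective endomorphism of a finite-dimensional space that preserves the subspace `x₁ = 0`
maps it onto itself); thus `ψ₁` does not depend on `x₂` either, and `ψ ∘ φ = id`, `φ ∘ ψ = id`
restrict to the slices. Because `H = H₁ ∘ pr₁` on `X`, also `H ∘ φ = (H₁ ∘ φ₁₁) ∘ pr₁` on `X̃`,
which gives both partial gradients of `H ∘ φ`. The discrete gradient property is the chain rule
`(D̄φ₁₁ᵀ D̄H₁)ᵀ (x̃₁' - x̃₁) = D̄H₁ᵀ (φ₁₁(x̃₁') - φ₁₁(x̃₁)) = H₁(φ₁₁(x̃₁')) - H₁(φ₁₁(x̃₁))`.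
-/

open Filter Topology ContinuousLinearMap

theorem LinearMap.mapsTo_of_leftInverse {K V : Type*} [Field K] [AddCommGroup V] [Module K V]
    [FiniteDimensional K V] {L M : V →ₗ[K] V} (h : Function.LeftInverse L M)
    {p : Submodule K V} (hL : MapsTo L p p) : MapsTo M p p := by
  intro v hv
  have hLinj : Function.Injective L := LinearMap.injective_iff_surjective.2 h.surjective
  have hLpinj : Function.Injective (L.restrict hL) := fun a b hab =>
    Subtype.ext (hLinj (congrArg Subtype.val hab))
  obtain ⟨⟨w, hw⟩, hLw⟩ := LinearMap.injective_iff_surjective.1 hLpinj ⟨v, hv⟩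
  have hMv : M v = w := hLinj (by rw [h v]; exact congrArg Subtype.val hLw.symm)
  exact hMv ▸ hw

theorem Set.LeftInvOn.comp_prodMk_fst {α β γ δ : Type*} {φ : α × β → γ × δ}
    {ψ : γ × δ → α × β} {g : γ → α} {s : Set α} {t : Set β} {u : Set (γ × δ)} {b : β}
    (hψφ : LeftInvOn ψ φ (s ×ˢ t)) (hφ : MapsTo φ (s ×ˢ t) u)
    (hg : EqOn (Prod.fst ∘ ψ) (g ∘ Prod.fst) u) (hb : b ∈ t) :
    LeftInvOn g (fun a => (φ (a, b)).1) s := fun a ha => by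
  simpa [hψφ (mk_mem_prod ha hb)] using (hg (hφ (mk_mem_prod ha hb))).symm

section ProductDomain

variable {E₁ E₂ F : Type*} [NormedAddCommGroup E₁] [NormedSpace ℝ E₁]
  [NormedAddCommGroup E₂] [NormedSpace ℝ E₂] [NormedAddCommGroup F] [NormedSpace ℝ F]

theorem fst_comp_comp_inr_eq_zero_of_comp_eq_id [FiniteDimensional ℝ E₁] [FiniteDimensional ℝ E₂]
    {L M : E₁ × E₂ →L[ℝ] E₁ × E₂} (hLM : L.comp M = .id ℝ _)
    (hL : ((fst ℝ E₁ E₂).comp L).comp (inr ℝ E₁ E₂) = 0) :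
    ((fst ℝ E₁ E₂).comp M).comp (inr ℝ E₁ E₂) = 0 := by
  have hMaps : MapsTo M (LinearMap.ker (LinearMap.fst ℝ E₁ E₂))
      (LinearMap.ker (LinearMap.fst ℝ E₁ E₂)) := by
    refine LinearMap.mapsTo_of_leftInverse (L := (L : E₁ × E₂ →ₗ[ℝ] E₁ × E₂))
      (fun v => congrArg (· v) hLM) fun v (hv : v.1 = 0) => ?_
    have hv' : v = (0, v.2) := Prod.ext hv rfl
    show (L v).1 = 0
    rw [hv']
    exact congrArg (· v.2) hL
  ext v
  exact LinearMap.mem_ker.1 (hMaps (x := (0, v)) (LinearMap.mem_ker.2 rfl))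

theorem HasFDerivAt.comp_eq_id_of_leftInvOn {G : Type*} [NormedAddCommGroup G] [NormedSpace ℝ G]
    {φ : G → F} {ψ : F → G} {φ' : G →L[ℝ] F} {ψ' : F →L[ℝ] G} {s : Set F} {x : F}
    (hs : s ∈ 𝓝 x) (hφψ : LeftInvOn φ ψ s) (hφ : HasFDerivAt φ φ' (ψ x))
    (hψ : HasFDerivAt ψ ψ' x) : φ'.comp ψ' = .id ℝ F :=
  ((hφ.comp x hψ).congr_of_eventuallyEq
    (eventually_of_mem hs fun _ hy => (hφψ hy).symm)).unique (hasFDerivAt_id x)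

theorem eqOn_comp_fst_of_comp_inr_eq_zero {f : E₁ × E₂ → F} {f' : E₁ × E₂ → E₁ × E₂ →L[ℝ] F}
    {s : Set E₁} {t : Set E₂} {y₀ : E₂} (ht : Convex ℝ t)
    (hf : ∀ p ∈ s ×ˢ t, HasFDerivAt f (f' p) p)
    (hf' : ∀ p ∈ s ×ˢ t, (f' p).comp (inr ℝ E₁ E₂) = 0) (hy₀ : y₀ ∈ t) :
    EqOn f ((fun x => f (x, y₀)) ∘ Prod.fst) (s ×ˢ t) := by
  rintro ⟨x, y⟩ ⟨hx, hy⟩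
  have hslice : ∀ z ∈ t, HasFDerivWithinAt (fun z => f (x, z)) (0 : E₂ →L[ℝ] F) t z := by
    intro z hz
    have h := (hf (x, z) (mk_mem_prod hx hz)).comp z (hasFDerivAt_prodMk_right x z)
    rw [hf' _ (mk_mem_prod hx hz)] at h
    exact h.hasFDerivWithinAt
  show f (x, y) = f (x, y₀)
  simpa [sub_eq_zero] using
    ht.norm_image_sub_le_of_norm_hasFDerivWithin_le (C := 0) hslice (fun _ _ => by simp) hy₀ hy

theorem ContDiffOn.comp_prodMk_left {n : WithTop ℕ∞} {f : E₁ × E₂ → F} {s : Set E₁}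
    {t : Set E₂} {y : E₂} (hf : ContDiffOn ℝ n f (s ×ˢ t)) (hy : y ∈ t) :
    ContDiffOn ℝ n (fun x => f (x, y)) s :=
  hf.comp (contDiff_prodMk_left y).contDiffOn fun _ hx => mk_mem_prod hx hy

theorem HasFDerivAt.of_eqOn_comp_fst {f : E₁ × E₂ → F} {f' : E₁ × E₂ →L[ℝ] F} {g : E₁ → F}
    {U : Set (E₁ × E₂)} {p : E₁ × E₂} (hU : U ∈ 𝓝 p) (hfg : EqOn f (g ∘ Prod.fst) U)
    (hf : HasFDerivAt f f' p) : HasFDerivAt g (f'.comp (inl ℝ E₁ E₂)) p.1 := by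
  have hpU : (fun x => (x, p.2)) ⁻¹' U ∈ 𝓝 p.1 :=
    (continuous_id.prodMk continuous_const).continuousAt.preimage_mem_nhds hU
  exact (hf.comp p.1 (hasFDerivAt_prodMk_left p.1 p.2)).congr_of_eventuallyEq
    (eventually_of_mem hpU fun x hx => (hfg hx).symm)

theorem fderiv_eq_comp_fst_of_eventuallyEq {f : E₁ × E₂ → F} {g : E₁ → F} {p : E₁ × E₂}
    (hfg : f =ᶠ[𝓝 p] g ∘ Prod.fst) (hg : DifferentiableAt ℝ g p.1) :
    fderiv ℝ f p = (fderiv ℝ g p.1).comp (fst ℝ E₁ E₂) :=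
  ((hg.hasFDerivAt.comp p hasFDerivAt_fst).congr_of_eventuallyEq hfg).fderiv

end ProductDomain

theorem ContinuousLinearMap.eq_zero_of_apply_single_eq_zero {n : ℕ} {F : Type*}
    [NormedAddCommGroup F] [NormedSpace ℝ F] {L : (Fin n → ℝ) →L[ℝ] F}
    (h : ∀ j, L (Pi.single j 1) = 0) : L = 0 :=
  ContinuousLinearMap.coe_injective ((Pi.basisFun ℝ (Fin n)).ext fun j => by simpa using h j)

section Coordinates

variable {n1 n2 : ℕ} {f : (Fin n1 → ℝ) × (Fin n2 → ℝ) → ℝ} {g : (Fin n1 → ℝ) → ℝ}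
  {p : (Fin n1 → ℝ) × (Fin n2 → ℝ)}

theorem grad1_eq_grad_of_eventuallyEq (hfg : f =ᶠ[𝓝 p] g ∘ Prod.fst)
    (hg : DifferentiableAt ℝ g p.1) : grad1 f p = grad g p.1 := by
  ext i
  simp [grad1, grad, fderiv_eq_comp_fst_of_eventuallyEq hfg hg]

theorem grad2_eq_zero_of_eventuallyEq (hfg : f =ᶠ[𝓝 p] g ∘ Prod.fst)
    (hg : DifferentiableAt ℝ g p.1) : grad2 f p = 0 := by
  ext j
  simp [grad2, fderiv_eq_comp_fst_of_eventuallyEq hfg hg]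

end Coordinates

theorem grad_comp {n m : ℕ} {g : (Fin m → ℝ) → ℝ} {f : (Fin n → ℝ) → (Fin m → ℝ)}
    {x : Fin n → ℝ} (hg : DifferentiableAt ℝ g (f x)) (hf : DifferentiableAt ℝ f x) :
    grad (g ∘ f) x = (jac f x)ᵀ *ᵥ grad g (f x) := by
  ext i
  have hsum : ∀ w, fderiv ℝ g (f x) w = ∑ k, w k * fderiv ℝ g (f x) (Pi.single k 1) := by
    intro w
    conv_lhs => rw [← (Pi.basisFun ℝ (Fin m)).sum_repr w]
    simp
  simp only [grad, fderiv_comp x hg hf, ContinuousLinearMap.comp_apply]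
  rw [hsum]
  simp only [mulVec, dotProduct, transpose_apply, jac, of_apply, grad]

theorem IsDiscreteGradient.comp {n m : ℕ} {X : Set (Fin m → ℝ)} {Y : Set (Fin n → ℝ)}
    {g : (Fin m → ℝ) → ℝ} {Dg : (Fin m → ℝ) → (Fin m → ℝ) → (Fin m → ℝ)}
    {f : (Fin n → ℝ) → (Fin m → ℝ)} {Df : (Fin n → ℝ) → (Fin n → ℝ) → Matrix (Fin m) (Fin n) ℝ}
    (hDg : IsDiscreteGradient X g Dg) (hDf : IsDiscreteJacobian Y f Df)
    (hg : ∀ y ∈ X, DifferentiableAt ℝ g y) (hf : ∀ x ∈ Y, DifferentiableAt ℝ f x)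
    (hfXY : MapsTo f Y X) :
    IsDiscreteGradient Y (g ∘ f) fun x x' => (Df x x')ᵀ *ᵥ Dg (f x) (f x') := by
  obtain ⟨hDg_cont, hDg_diff, hDg_diag⟩ := hDg
  obtain ⟨hDf_cont, hDf_diff, hDf_diag⟩ := hDf
  have hfc : ContinuousOn f Y := fun x hx => (hf x hx).continuousAt.continuousWithinAt
  refine ⟨?_, fun x hx x' hx' => ?_, fun x hx => ?_⟩
  · have hDg_f : ContinuousOn (fun q : (Fin n → ℝ) × (Fin n → ℝ) => Dg (f q.1) (f q.2))
        (Y ×ˢ Y) :=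
      hDg_cont.comp ((hfc.comp continuousOn_fst fun q hq => hq.1).prodMk
        (hfc.comp continuousOn_snd fun q hq => hq.2)) fun q hq => ⟨hfXY hq.1, hfXY hq.2⟩
    exact (continuous_fst.matrix_transpose.matrix_mulVec continuous_snd).comp_continuousOn
      (hDf_cont.prodMk hDg_f)
  · show (Df x x')ᵀ *ᵥ Dg (f x) (f x') ⬝ᵥ (x' - x) = g (f x') - g (f x)
    rw [mulVec_transpose, ← dotProduct_mulVec, hDf_diff x hx x' hx']
    exact hDg_diff _ (hfXY hx) _ (hfXY hx')
  · show (Df x x)ᵀ *ᵥ Dg (f x) (f x) = _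
    rw [hDf_diag x hx, hDg_diag _ (hfXY hx), grad_comp (hg _ (hfXY hx)) (hf x hx)]

theorem specified_chain_rule_general {n1 n2 : ℕ}
    (X1 : Set (Fin n1 → ℝ)) (X2 : Set (Fin n2 → ℝ))
    (Xt1 : Set (Fin n1 → ℝ)) (Xt2 : Set (Fin n2 → ℝ))
    (hX1 : IsOpen X1) (hX2 : IsOpen X2) (hX2conv : Convex ℝ X2)
    (hXt1 : IsOpen Xt1) (hXt2 : IsOpen Xt2) (hXt2conv : Convex ℝ Xt2)
    (hX2ne : X2.Nonempty) (hXt2ne : Xt2.Nonempty)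
    -- φ is a C¹ diffeomorphism from X̃ = X̃1 × X̃2 onto X = X1 × X2
    (φ ψ : ((Fin n1 → ℝ) × (Fin n2 → ℝ)) → ((Fin n1 → ℝ) × (Fin n2 → ℝ)))
    (hφ : ContDiffOn ℝ 1 φ (Xt1 ×ˢ Xt2)) (hφmap : Set.MapsTo φ (Xt1 ×ˢ Xt2) (X1 ×ˢ X2))
    (hψ : ContDiffOn ℝ 1 ψ (X1 ×ˢ X2)) (hψmap : Set.MapsTo ψ (X1 ×ˢ X2) (Xt1 ×ˢ Xt2))
    (hψφ : ∀ xt ∈ Xt1 ×ˢ Xt2, ψ (φ xt) = xt) (hφψ : ∀ x ∈ X1 ×ˢ X2, φ (ψ x) = x)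
    -- D_{x̃₂}φ₁ = 0 on X̃
    (hDφ12 : ∀ xt ∈ Xt1 ×ˢ Xt2, ∀ (j : Fin n2),
      (fderiv ℝ φ xt ((0 : Fin n1 → ℝ), Pi.single j 1)).1 = 0)
    -- H with vanishing second partial gradient and its specified function H₁
    (H : ((Fin n1 → ℝ) × (Fin n2 → ℝ)) → ℝ)
    (H1 : (Fin n1 → ℝ) → ℝ) (hH1 : ContDiffOn ℝ 1 H1 X1)
    (hH1val : ∀ x1 ∈ X1, ∀ x2 ∈ X2, H1 x1 = H (x1, x2))
    -- a discrete gradient of H₁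
    (DH1 : (Fin n1 → ℝ) → (Fin n1 → ℝ) → (Fin n1 → ℝ))
    (hDH1 : IsDiscreteGradient X1 H1 DH1) :
    ∃ φ11 ψ11 : (Fin n1 → ℝ) → (Fin n1 → ℝ),
      -- (i) φ₁₁ is a diffeomorphism from X̃₁ onto X₁ specified by φ₁
      ContDiffOn ℝ 1 φ11 Xt1 ∧ Set.MapsTo φ11 Xt1 X1 ∧
      ContDiffOn ℝ 1 ψ11 X1 ∧ Set.MapsTo ψ11 X1 Xt1 ∧
      (∀ xt1 ∈ Xt1, ψ11 (φ11 xt1) = xt1) ∧ (∀ x1 ∈ X1, φ11 (ψ11 x1) = x1) ∧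
      (∀ xt1 ∈ Xt1, ∀ xt2 ∈ Xt2,
        φ11 xt1 = (φ (xt1, xt2)).1 ∧
        jac φ11 xt1 = Matrix.of (fun (i : Fin n1) (j : Fin n1) =>
          (fderiv ℝ φ (xt1, xt2) (Pi.single j 1, (0 : Fin n2 → ℝ))).1 i)) ∧
      -- (ii) H̃ = H ∘ φ has vanishing second partial gradient, its specified function
      -- is H₁ ∘ φ₁₁, and the chain rule yields a discrete gradient for it
      ((∀ xt ∈ Xt1 ×ˢ Xt2, grad2 (H ∘ φ) xt = 0) ∧
       (∀ xt1 ∈ Xt1, ∀ xt2 ∈ Xt2,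
          (H1 ∘ φ11) xt1 = (H ∘ φ) (xt1, xt2) ∧
          grad (H1 ∘ φ11) xt1 = grad1 (H ∘ φ) (xt1, xt2)) ∧
       (∀ Dφ11 : (Fin n1 → ℝ) → (Fin n1 → ℝ) → Matrix (Fin n1) (Fin n1) ℝ,
          IsDiscreteJacobian Xt1 φ11 Dφ11 →
          IsDiscreteGradient Xt1 (H1 ∘ φ11)
            (fun a b => (Dφ11 a b)ᵀ.mulVec (DH1 (φ11 a) (φ11 b))))) := by
  obtain ⟨y₀, hy₀⟩ := hXt2ne
  obtain ⟨x₀, hx₀⟩ := hX2ne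
  have hXt : IsOpen (Xt1 ×ˢ Xt2) := hXt1.prod hXt2
  have hX : IsOpen (X1 ×ˢ X2) := hX1.prod hX2
  have hφd : ∀ p ∈ Xt1 ×ˢ Xt2, HasFDerivAt φ (fderiv ℝ φ p) p := fun p hp =>
    (hφ.contDiffAt (hXt.mem_nhds hp)).differentiableAt_one.hasFDerivAt
  have hψd : ∀ x ∈ X1 ×ˢ X2, HasFDerivAt ψ (fderiv ℝ ψ x) x := fun x hx =>
    (hψ.contDiffAt (hX.mem_nhds hx)).differentiableAt_one.hasFDerivAt
  have hH1d : ∀ x ∈ X1, DifferentiableAt ℝ H1 x := fun x hx =>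
    (hH1.contDiffAt (hX1.mem_nhds hx)).differentiableAt_one
  have hφ_block : ∀ p ∈ Xt1 ×ˢ Xt2, ((fst ℝ _ _).comp (fderiv ℝ φ p)).comp (inr ℝ _ _) = 0 :=
    fun p hp => eq_zero_of_apply_single_eq_zero (hDφ12 p hp)
  have hψ_block : ∀ x ∈ X1 ×ˢ X2, ((fst ℝ _ _).comp (fderiv ℝ ψ x)).comp (inr ℝ _ _) = 0 :=
    fun x hx => fst_comp_comp_inr_eq_zero_of_comp_eq_id
      ((hφd _ (hψmap hx)).comp_eq_id_of_leftInvOn (hX.mem_nhds hx) hφψ (hψd x hx))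
      (hφ_block _ (hψmap hx))
  have hφ₁ := eqOn_comp_fst_of_comp_inr_eq_zero hXt2conv
    (fun p hp => hasFDerivAt_fst.comp p (hφd p hp)) hφ_block hy₀
  have hψ₁ := eqOn_comp_fst_of_comp_inr_eq_zero hX2conv
    (fun x hx => hasFDerivAt_fst.comp x (hψd x hx)) hψ_block hx₀
  set φ11 := fun a => (φ (a, y₀)).1
  have hφ11map : MapsTo φ11 Xt1 X1 := fun a ha => (hφmap (mk_mem_prod ha hy₀)).1
  have hφ11d : ∀ p ∈ Xt1 ×ˢ Xt2,
      HasFDerivAt φ11 (((fst ℝ _ _).comp (fderiv ℝ φ p)).comp (inl ℝ _ _)) p.1 :=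
    fun p hp => (hasFDerivAt_fst.comp p (hφd p hp)).of_eqOn_comp_fst (hXt.mem_nhds hp) hφ₁
  have hH1φ11d : ∀ a ∈ Xt1, DifferentiableAt ℝ (H1 ∘ φ11) a := fun a ha =>
    (hH1d _ (hφ11map ha)).comp a (hφ11d _ (mk_mem_prod ha hy₀)).differentiableAt
  have hHφ : EqOn (H ∘ φ) ((H1 ∘ φ11) ∘ Prod.fst) (Xt1 ×ˢ Xt2) := fun p hp => by
    have h : (φ p).1 = φ11 p.1 := hφ₁ hp
    rw [Function.comp_apply, Function.comp_apply, Function.comp_apply, ← h,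
      hH1val _ (hφmap hp).1 _ (hφmap hp).2]
  have hHφ_nhds : ∀ p ∈ Xt1 ×ˢ Xt2, H ∘ φ =ᶠ[𝓝 p] (H1 ∘ φ11) ∘ Prod.fst := fun p hp =>
    eventually_of_mem (hXt.mem_nhds hp) hHφ
  have hjac : ∀ p ∈ Xt1 ×ˢ Xt2,
      jac φ11 p.1 = of fun i j => (fderiv ℝ φ p (Pi.single j 1, 0)).1 i := fun p hp => by
    rw [jac, (hφ11d p hp).fderiv]
    rfl
  refine ⟨φ11, fun x => (ψ (x, x₀)).1,
    contDiff_fst.comp_contDiffOn (hφ.comp_prodMk_left hy₀), hφ11map,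
    contDiff_fst.comp_contDiffOn (hψ.comp_prodMk_left hx₀),
    fun x hx => (hψmap (mk_mem_prod hx hx₀)).1,
    LeftInvOn.comp_prodMk_fst hψφ hφmap hψ₁ hy₀, LeftInvOn.comp_prodMk_fst hφψ hψmap hφ₁ hx₀,
    fun a ha y hy => ⟨(hφ₁ (mk_mem_prod ha hy)).symm, hjac _ (mk_mem_prod ha hy)⟩,
    fun p hp => grad2_eq_zero_of_eventuallyEq (hHφ_nhds p hp) (hH1φ11d _ hp.1),
    fun a ha y hy => ⟨(hHφ (mk_mem_prod ha hy)).symm,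
      (grad1_eq_grad_of_eventuallyEq (hHφ_nhds _ (mk_mem_prod ha hy)) (hH1φ11d _ ha)).symm⟩,
    fun Dφ11 hDφ11 => hDH1.comp hDφ11 hH1d
      (fun a ha => (hφ11d _ (mk_mem_prod ha hy₀)).differentiableAt) hφ11map⟩

/-- for a diffeomorphism `φ = (φ₁, φ₂)` with `D_{x̃₂}φ₁ = 0` there is a
reduced diffeomorphism `φ₁₁`, and the specified function of `H̃ = H ∘ φ` is
`H₁ ∘ φ₁₁`, with the chain rule producing a discrete gradient for it. -/
theorem specified_chain_rule {n1 n2 : ℕ}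
    (X1 : Set (Fin n1 → ℝ)) (X2 : Set (Fin n2 → ℝ))
    (Xt1 : Set (Fin n1 → ℝ)) (Xt2 : Set (Fin n2 → ℝ))
    (hX1 : IsOpen X1) (hX2 : IsOpen X2) (hX2conv : Convex ℝ X2)
    (hXt1 : IsOpen Xt1) (hXt2 : IsOpen Xt2) (hXt2conv : Convex ℝ Xt2)
    (hX2ne : X2.Nonempty) (hXt2ne : Xt2.Nonempty)
    -- φ is a C¹ diffeomorphism from X̃ = X̃1 × X̃2 onto X = X1 × X2
    (φ ψ : ((Fin n1 → ℝ) × (Fin n2 → ℝ)) → ((Fin n1 → ℝ) × (Fin n2 → ℝ)))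
    (hφ : ContDiffOn ℝ 1 φ (Xt1 ×ˢ Xt2)) (hφmap : Set.MapsTo φ (Xt1 ×ˢ Xt2) (X1 ×ˢ X2))
    (hψ : ContDiffOn ℝ 1 ψ (X1 ×ˢ X2)) (hψmap : Set.MapsTo ψ (X1 ×ˢ X2) (Xt1 ×ˢ Xt2))
    (hψφ : ∀ xt ∈ Xt1 ×ˢ Xt2, ψ (φ xt) = xt) (hφψ : ∀ x ∈ X1 ×ˢ X2, φ (ψ x) = x)
    -- D_{x̃₂}φ₁ = 0 on X̃
    (hDφ12 : ∀ xt ∈ Xt1 ×ˢ Xt2, ∀ (j : Fin n2),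
      (fderiv ℝ φ xt ((0 : Fin n1 → ℝ), Pi.single j 1)).1 = 0)
    -- H with vanishing second partial gradient and its specified function H₁
    (H : ((Fin n1 → ℝ) × (Fin n2 → ℝ)) → ℝ) (hH : ContDiffOn ℝ 1 H (X1 ×ˢ X2))
    (hHgrad2 : ∀ x ∈ X1 ×ˢ X2, grad2 H x = 0)
    (H1 : (Fin n1 → ℝ) → ℝ) (hH1 : ContDiffOn ℝ 1 H1 X1)
    (hH1val : ∀ x1 ∈ X1, ∀ x2 ∈ X2, H1 x1 = H (x1, x2))
    (hH1grad : ∀ x1 ∈ X1, ∀ x2 ∈ X2, grad H1 x1 = grad1 H (x1, x2))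
    -- a discrete gradient of H₁
    (DH1 : (Fin n1 → ℝ) → (Fin n1 → ℝ) → (Fin n1 → ℝ))
    (hDH1 : IsDiscreteGradient X1 H1 DH1) :
    ∃ φ11 ψ11 : (Fin n1 → ℝ) → (Fin n1 → ℝ),
      -- (i) φ₁₁ is a diffeomorphism from X̃₁ onto X₁ specified by φ₁
      ContDiffOn ℝ 1 φ11 Xt1 ∧ Set.MapsTo φ11 Xt1 X1 ∧
      ContDiffOn ℝ 1 ψ11 X1 ∧ Set.MapsTo ψ11 X1 Xt1 ∧
      (∀ xt1 ∈ Xt1, ψ11 (φ11 xt1) = xt1) ∧ (∀ x1 ∈ X1, φ11 (ψ11 x1) = x1) ∧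
      (∀ xt1 ∈ Xt1, ∀ xt2 ∈ Xt2,
        φ11 xt1 = (φ (xt1, xt2)).1 ∧
        jac φ11 xt1 = Matrix.of (fun (i : Fin n1) (j : Fin n1) =>
          (fderiv ℝ φ (xt1, xt2) (Pi.single j 1, (0 : Fin n2 → ℝ))).1 i)) ∧
      -- (ii) H̃ = H ∘ φ has vanishing second partial gradient, its specified function
      -- is H₁ ∘ φ₁₁, and the chain rule yields a discrete gradient for it
      ((∀ xt ∈ Xt1 ×ˢ Xt2, grad2 (H ∘ φ) xt = 0) ∧
       (∀ xt1 ∈ Xt1, ∀ xt2 ∈ Xt2,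
          (H1 ∘ φ11) xt1 = (H ∘ φ) (xt1, xt2) ∧
          grad (H1 ∘ φ11) xt1 = grad1 (H ∘ φ) (xt1, xt2)) ∧
       (∀ Dφ11 : (Fin n1 → ℝ) → (Fin n1 → ℝ) → Matrix (Fin n1) (Fin n1) ℝ,
          IsDiscreteJacobian Xt1 φ11 Dφ11 →
          IsDiscreteGradient Xt1 (H1 ∘ φ11)
            (fun a b => (Dφ11 a b)ᵀ.mulVec (DH1 (φ11 a) (φ11 b))))) :=
  specified_chain_rule_general X1 X2 Xt1 Xt2 hX1 hX2 hX2conv hXt1 hXt2 hXt2conv hX2ne hXt2ne φ ψ hφ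
    hφmap hψ hψmap hψφ hφψ hDφ12 H H1 hH1 hH1val DH1 hDH1
end
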